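/- Let H be a complex Hilbert space, A a positive bounded operator, T, S bounded operators admitting A-adjoints, and α ∈ [0,1]. Then ‖T + S‖_A² ≤ √( ‖(T^♯T)² + (S^♯S)²‖_A + 2 w_A(S^♯T)² ) + (α+1) ‖T‖_A ‖S‖_A + (1−α) w_A(S^♯T). -/

import Mathlib

open scoped InnerProductSpace

variable {H : Type*} [NormedAddCommGroup H] [InnerProductSpace ℂ H] [CompleteSpace H]

/-- The `A`-semi-inner product `⟪x, y⟫_A = ⟪A x, y⟫`. -/
noncomputable def ipA (A : H →L[ℂ] H) (x y : H) : ℂ := ⟪A x, y⟫_ℂ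

/-- The `A`-semi-norm `‖x‖_A = √(re ⟪A x, x⟫)`. -/
noncomputable def nA (A : H →L[ℂ] H) (x : H) : ℝ := Real.sqrt (ipA A x x).re

/-- The `A`-numerical radius. -/
noncomputable def wA (A T : H →L[ℂ] H) : ℝ :=
  sSup {c : ℝ | ∃ x : H, nA A x = 1 ∧ c = ‖ipA A (T x) x‖}

/-- The `A`-operator seminorm. -/
noncomputable def opA (A T : H →L[ℂ] H) : ℝ :=
  sSup {c : ℝ | ∃ x : H, nA A x = 1 ∧ c = nA A (T x)}

/-! With `B = √A` one has `⟪x, y⟫_A = ⟪B x, B y⟫`, so for `‖x‖_A = 1` everything is a statement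
about the vectors `a = B T x` and `b = B S x` of `H`. Testing `a + b` against its own direction `e`
gives `‖a + b‖ ≤ |⟪a, e⟫| + |⟪e, b⟫|`. After squaring, the two square terms are bounded by
`√(‖a‖⁴ + ‖b‖⁴ + 2 |⟪a, b⟫|²)` and the cross term by a convex combination of the Cauchy–Schwarz
and Buzano inequalities. Finally `‖a‖⁴ = ‖T x‖_A⁴ ≤ re ⟪(T^♯T)² x, x⟫_A`, likewise for `b`, and
`⟪a, b⟫ = ⟪S^♯T x, x⟫_A`. -/

open scoped ComplexConjugate

section InnerProductSpace

variable {𝕜 E : Type*} [RCLike 𝕜] [NormedAddCommGroup E] [InnerProductSpace 𝕜 E]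

theorem norm_inner_mul_inner_le (a b e : E) (he : ‖e‖ = 1) :
    ‖⟪a, e⟫_𝕜 * ⟪e, b⟫_𝕜‖ ≤ (‖a‖ * ‖b‖ + ‖⟪a, b⟫_𝕜‖) / 2 := by
  -- the reflection `b ↦ 2⟪e, b⟫ e - b` is an isometry
  have hrefl : ‖(2 * ⟪e, b⟫_𝕜) • e - b‖ = ‖b‖ := by
    have hinner : ⟪(2 * ⟪e, b⟫_𝕜) • e, b⟫_𝕜 = ((2 * ‖⟪e, b⟫_𝕜‖ ^ 2 : ℝ) : 𝕜) := by
      rw [inner_smul_left, map_mul, map_ofNat, mul_assoc, RCLike.conj_mul]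
      push_cast; ring
    have : ‖(2 * ⟪e, b⟫_𝕜) • e - b‖ ^ 2 = ‖b‖ ^ 2 := by
      rw [norm_sub_sq (𝕜 := 𝕜), hinner, RCLike.ofReal_re, norm_smul, he, mul_one, norm_mul,
        RCLike.norm_ofNat]
      ring
    exact (sq_eq_sq₀ (norm_nonneg _) (norm_nonneg _)).mp this
  calc ‖⟪a, e⟫_𝕜 * ⟪e, b⟫_𝕜‖ = ‖⟪a, (2 * ⟪e, b⟫_𝕜) • e - b⟫_𝕜 + ⟪a, b⟫_𝕜‖ / 2 := by
        rw [inner_sub_right, inner_smul_right, sub_add_cancel, norm_mul, norm_mul, norm_mul,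
          RCLike.norm_ofNat]
        ring
    _ ≤ (‖a‖ * ‖b‖ + ‖⟪a, b⟫_𝕜‖) / 2 := by
        gcongr
        refine (norm_add_le _ _).trans (add_le_add_left ?_ _)
        exact (norm_inner_le_norm _ _).trans_eq (by rw [hrefl])

theorem sq_norm_inner_add_sq_norm_inner_le (a b e : E) (he : ‖e‖ = 1) :
    ‖⟪a, e⟫_𝕜‖ ^ 2 + ‖⟪b, e⟫_𝕜‖ ^ 2 ≤
      √(‖a‖ ^ 4 + ‖b‖ ^ 4 + 2 * ‖⟪a, b⟫_𝕜‖ ^ 2) := by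
  set u := ⟪a, e⟫_𝕜
  set v := ⟪b, e⟫_𝕜
  set s := ‖u‖ ^ 2 + ‖v‖ ^ 2
  -- `s = ⟪w, e⟫ ≤ ‖w‖`, while `‖w‖² ≤ s √(‖a‖⁴ + ‖b‖⁴ + 2 |⟪a, b⟫|²)`
  set w := u • a + v • b
  have hs : s ≤ ‖w‖ := by
    have hwe : ⟪w, e⟫_𝕜 = (s : 𝕜) := by
      rw [inner_add_left, inner_smul_left, inner_smul_left, RCLike.conj_mul, RCLike.conj_mul]
      simp only [s]; push_cast; rfl
    simpa [hwe, he, abs_of_nonneg (by positivity : 0 ≤ s)] using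
      norm_inner_le_norm (𝕜 := 𝕜) w e
  have hw : ‖w‖ ^ 2 ≤ ‖u‖ ^ 2 * ‖a‖ ^ 2 + ‖v‖ ^ 2 * ‖b‖ ^ 2 + 2 * ‖u‖ * ‖v‖ * ‖⟪a, b⟫_𝕜‖ := by
    have hre : RCLike.re ⟪u • a, v • b⟫_𝕜 ≤ ‖u‖ * ‖v‖ * ‖⟪a, b⟫_𝕜‖ := by
      refine (RCLike.re_le_norm _).trans_eq ?_
      rw [inner_smul_left, inner_smul_right, norm_mul, norm_mul, RCLike.norm_conj, mul_assoc]
    rw [norm_add_sq (𝕜 := 𝕜), norm_smul, norm_smul]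
    nlinarith
  -- Cauchy–Schwarz in `ℝ³` for `(‖u‖², ‖v‖², √2 ‖u‖ ‖v‖)` and `(‖a‖², ‖b‖², √2 |⟪a, b⟫|)`
  have hcs : ‖u‖ ^ 2 * ‖a‖ ^ 2 + ‖v‖ ^ 2 * ‖b‖ ^ 2 + 2 * ‖u‖ * ‖v‖ * ‖⟪a, b⟫_𝕜‖ ≤
      s * √(‖a‖ ^ 4 + ‖b‖ ^ 4 + 2 * ‖⟪a, b⟫_𝕜‖ ^ 2) := by
    rw [← Real.sqrt_sq (by positivity : 0 ≤ s), ← Real.sqrt_mul (sq_nonneg _)]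
    apply Real.le_sqrt_of_sq_le
    nlinarith [sq_nonneg (‖u‖ ^ 2 * ‖b‖ ^ 2 - ‖v‖ ^ 2 * ‖a‖ ^ 2),
      sq_nonneg (‖u‖ ^ 2 * ‖⟪a, b⟫_𝕜‖ - ‖u‖ * ‖v‖ * ‖a‖ ^ 2),
      sq_nonneg (‖v‖ ^ 2 * ‖⟪a, b⟫_𝕜‖ - ‖u‖ * ‖v‖ * ‖b‖ ^ 2)]
  have hs0 : 0 ≤ s := by positivity
  nlinarith [Real.sqrt_nonneg (‖a‖ ^ 4 + ‖b‖ ^ 4 + 2 * ‖⟪a, b⟫_𝕜‖ ^ 2)]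

theorem sq_norm_inner_add_norm_inner_le (a b e : E) (he : ‖e‖ = 1) {α : ℝ}
    (hα : α ∈ Set.Icc (0 : ℝ) 1) :
    (‖⟪a, e⟫_𝕜‖ + ‖⟪e, b⟫_𝕜‖) ^ 2 ≤
      √(‖a‖ ^ 4 + ‖b‖ ^ 4 + 2 * ‖⟪a, b⟫_𝕜‖ ^ 2) +
        (1 + α) * (‖a‖ * ‖b‖) + (1 - α) * ‖⟪a, b⟫_𝕜‖ := by
  obtain ⟨hα0, hα1⟩ := hα
  have hsq := sq_norm_inner_add_sq_norm_inner_le (𝕜 := 𝕜) a b e he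
  have hbuz := norm_inner_mul_inner_le (𝕜 := 𝕜) a b e he
  have hcs : ‖⟪a, e⟫_𝕜 * ⟪e, b⟫_𝕜‖ ≤ ‖a‖ * ‖b‖ := by
    rw [norm_mul]
    gcongr <;> exact (norm_inner_le_norm _ _).trans_eq (by rw [he]; ring)
  -- the cross term is bounded by a convex combination of the Cauchy–Schwarz and Buzano bounds
  calc (‖⟪a, e⟫_𝕜‖ + ‖⟪e, b⟫_𝕜‖) ^ 2
      = ‖⟪a, e⟫_𝕜‖ ^ 2 + ‖⟪b, e⟫_𝕜‖ ^ 2 + 2 * ‖⟪a, e⟫_𝕜 * ⟪e, b⟫_𝕜‖ := by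
        rw [norm_mul, norm_inner_symm e b]; ring
    _ ≤ _ := by nlinarith

theorem sq_norm_add_le (a b : E) {α : ℝ} (hα : α ∈ Set.Icc (0 : ℝ) 1) :
    ‖a + b‖ ^ 2 ≤
      √(‖a‖ ^ 4 + ‖b‖ ^ 4 + 2 * ‖⟪a, b⟫_𝕜‖ ^ 2) +
        (1 + α) * (‖a‖ * ‖b‖) + (1 - α) * ‖⟪a, b⟫_𝕜‖ := by
  obtain hy | hy := eq_or_ne (a + b) 0
  · obtain ⟨hα0, hα1⟩ := hα
    rw [hy, norm_zero, zero_pow two_ne_zero]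
    exact add_nonneg (add_nonneg (Real.sqrt_nonneg _) (mul_nonneg (by linarith) (by positivity)))
      (mul_nonneg (by linarith) (norm_nonneg _))
  set e : E := (‖a + b‖ : 𝕜)⁻¹ • (a + b)
  have he : ‖e‖ = 1 := norm_smul_inv_norm hy
  have hnorm : ‖a + b‖ ≤ ‖⟪a, e⟫_𝕜‖ + ‖⟪e, b⟫_𝕜‖ := calc
    ‖a + b‖ = ‖⟪a + b, e⟫_𝕜‖ := by
      rw [inner_smul_right, inner_self_eq_norm_sq_to_K, norm_mul, norm_pow, norm_inv,
        RCLike.norm_ofReal, abs_norm]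
      field_simp [norm_ne_zero_iff.mpr hy]
    _ ≤ ‖⟪a, e⟫_𝕜‖ + ‖⟪e, b⟫_𝕜‖ := by
      rw [inner_add_left, norm_inner_symm e b]; exact norm_add_le _ _
  calc ‖a + b‖ ^ 2 ≤ (‖⟪a, e⟫_𝕜‖ + ‖⟪e, b⟫_𝕜‖) ^ 2 := by gcongr
    _ ≤ _ := sq_norm_inner_add_norm_inner_le a b e he hα

end InnerProductSpace

theorem le_of_forall_pow_two_pow_le_mul {t r C : ℝ} (hr : 0 ≤ r)
    (h : ∀ n : ℕ, t ^ 2 ^ n ≤ C * r ^ 2 ^ n) : t ≤ r := by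
  by_contra! hrt
  obtain rfl | hr := hr.eq_or_lt
  · have h0 := h 0
    norm_num at h0
    linarith
  have hq : 1 < t / r := (one_lt_div hr).mpr hrt
  obtain ⟨n, hn⟩ := pow_unbounded_of_one_lt C hq
  have hC : (t / r) ^ 2 ^ n ≤ C := by
    rw [div_pow, div_le_iff₀ (by positivity)]
    exact h n
  exact hn.not_ge ((pow_le_pow_right₀ hq.le Nat.lt_two_pow_self.le).trans hC)

def IsAAdjoint (A G Gs : H →L[ℂ] H) : Prop :=
  ∀ x y, ipA A (G x) y = ipA A x (Gs y)

namespace IsAAdjoint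

variable {A G Gs F Fs : H →L[ℂ] H}

theorem symm (hA : IsSelfAdjoint A) (hG : IsAAdjoint A G Gs) : IsAAdjoint A Gs G := by
  have hconj : ∀ u v, ipA A u v = conj (ipA A v u) := fun u v => by
    have hsymm := hA.isSymmetric v u
    rw [ContinuousLinearMap.coe_coe] at hsymm
    rw [ipA, ipA, hsymm, inner_conj_symm]
  intro x y
  rw [hconj, ← hG, ← hconj]

omit [CompleteSpace H]

theorem comp (hG : IsAAdjoint A G Gs) (hF : IsAAdjoint A F Fs) :
    IsAAdjoint A (G ∘L F) (Fs ∘L Gs) := fun x y => by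
  rw [ContinuousLinearMap.comp_apply, hG, hF]; rfl

theorem add (hG : IsAAdjoint A G Gs) (hF : IsAAdjoint A F Fs) :
    IsAAdjoint A (G + F) (Gs + Fs) := fun x y => by
  simp only [ipA, add_apply, map_add, inner_add_left, inner_add_right]
  exact congrArg₂ (· + ·) (hG x y) (hF x y)

theorem pow (hG : IsAAdjoint A G Gs) (n : ℕ) : IsAAdjoint A (G ^ n) (Gs ^ n) := by
  induction n with
  | zero => intro x y; rfl
  | succ n ih => rw [pow_succ, pow_succ']; exact ih.comp hG

end IsAAdjoint

omit [CompleteSpace H] in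
theorem opA_nonneg (A G : H →L[ℂ] H) : 0 ≤ opA A G :=
  Real.sSup_nonneg fun _ ⟨_, _, hc⟩ => hc ▸ Real.sqrt_nonneg _

omit [CompleteSpace H] in
theorem wA_nonneg (A G : H →L[ℂ] H) : 0 ≤ wA A G :=
  Real.sSup_nonneg fun _ ⟨_, _, hc⟩ => hc ▸ norm_nonneg _

section ASeminorm

variable {A : H →L[ℂ] H}

theorem ipA_eq_inner_sqrt (hA : A.IsPositive) (x y : H) :
    ipA A x y = ⟪CFC.sqrt A x, CFC.sqrt A y⟫_ℂ := by
  have hA0 : 0 ≤ A := (ContinuousLinearMap.nonneg_iff_isPositive A).mpr hA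
  have hsqrt : IsSelfAdjoint (CFC.sqrt A) := (CFC.sqrt_nonneg A).isSelfAdjoint
  have hsymm := hsqrt.isSymmetric (CFC.sqrt A x) y
  rw [ContinuousLinearMap.coe_coe] at hsymm
  rw [ipA, ← hsymm, ← mul_apply_eq_comp, ← sq, CFC.sq_sqrt A hA0]

theorem nA_eq_norm_sqrt (hA : A.IsPositive) (x : H) : nA A x = ‖CFC.sqrt A x‖ := by
  rw [nA, ipA_eq_inner_sqrt hA, inner_self_eq_norm_sq_to_K]
  norm_cast
  exact Real.sqrt_sq (norm_nonneg _)

omit [CompleteSpace H] in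
theorem sq_nA (hA : A.IsPositive) (x : H) : nA A x ^ 2 = (ipA A x x).re :=
  Real.sq_sqrt (hA.re_inner_nonneg_left x)

theorem norm_ipA_le (hA : A.IsPositive) (x y : H) : ‖ipA A x y‖ ≤ nA A x * nA A y := by
  rw [ipA_eq_inner_sqrt hA, nA_eq_norm_sqrt hA, nA_eq_norm_sqrt hA]
  exact norm_inner_le_norm _ _

theorem re_ipA_le_nA (hA : A.IsPositive) {x : H} (hx : nA A x = 1) (y : H) :
    (ipA A x y).re ≤ nA A y :=
  (Complex.re_le_norm _).trans ((norm_ipA_le hA x y).trans_eq (by rw [hx, one_mul]))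

omit [CompleteSpace H] in
theorem sq_nA_apply (hA : A.IsPositive) {G Gs : H →L[ℂ] H} (hG : IsAAdjoint A G Gs) (x : H) :
    nA A (G x) ^ 2 = (ipA A x (Gs (G x))).re := by
  rw [sq_nA hA, hG]

theorem nA_apply_le_opNorm (hA : A.IsPositive) {Q : H →L[ℂ] H} (hQ : IsAAdjoint A Q Q) {x : H}
    (hx : nA A x = 1) : nA A (Q x) ≤ ‖Q‖ := by
  -- `‖x‖_A = 1` does not bound `‖x‖`, but the constant `‖√A‖ ‖x‖` below disappears under
  -- `2 ^ n`-th roots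
  have hiter : ∀ n : ℕ, nA A (Q x) ^ 2 ^ n ≤ nA A ((Q ^ 2 ^ n) x) := by
    intro n
    induction n with
    | zero => simp
    | succ n ih =>
      calc nA A (Q x) ^ 2 ^ (n + 1) = (nA A (Q x) ^ 2 ^ n) ^ 2 := by rw [pow_succ, pow_mul]
        _ ≤ nA A ((Q ^ 2 ^ n) x) ^ 2 := by gcongr; exact pow_nonneg (Real.sqrt_nonneg _) _
        _ = (ipA A x ((Q ^ 2 ^ (n + 1)) x)).re := by
          rw [sq_nA_apply hA (hQ.pow _), ← mul_apply_eq_comp, ← pow_add, ← mul_two, ← pow_succ]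
        _ ≤ nA A ((Q ^ 2 ^ (n + 1)) x) := re_ipA_le_nA hA hx _
  refine le_of_forall_pow_two_pow_le_mul (C := ‖CFC.sqrt A‖ * ‖x‖) (norm_nonneg Q) fun n => ?_
  calc nA A (Q x) ^ 2 ^ n ≤ nA A ((Q ^ 2 ^ n) x) := hiter n
    _ = ‖CFC.sqrt A ((Q ^ 2 ^ n) x)‖ := nA_eq_norm_sqrt hA _
    _ ≤ ‖CFC.sqrt A‖ * (‖Q ^ 2 ^ n‖ * ‖x‖) :=
      (CFC.sqrt A).le_opNorm_of_le ((Q ^ 2 ^ n).le_opNorm x)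
    _ ≤ ‖CFC.sqrt A‖ * ‖x‖ * ‖Q‖ ^ 2 ^ n := by
      rw [mul_comm (‖Q ^ 2 ^ n‖), ← mul_assoc]
      gcongr
      exact norm_pow_le' Q (by positivity)

theorem nA_apply_le_sqrt_opNorm (hA : A.IsPositive) {G Gs : H →L[ℂ] H} (hG : IsAAdjoint A G Gs)
    {x : H} (hx : nA A x = 1) : nA A (G x) ≤ √‖Gs ∘L G‖ := by
  apply Real.le_sqrt_of_sq_le
  calc nA A (G x) ^ 2 = (ipA A x ((Gs ∘L G) x)).re := sq_nA_apply hA hG x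
    _ ≤ nA A ((Gs ∘L G) x) := re_ipA_le_nA hA hx _
    _ ≤ ‖Gs ∘L G‖ := nA_apply_le_opNorm hA ((hG.symm hA.isSelfAdjoint).comp hG) hx

theorem nA_apply_le_opA (hA : A.IsPositive) {G Gs : H →L[ℂ] H} (hG : IsAAdjoint A G Gs)
    {x : H} (hx : nA A x = 1) : nA A (G x) ≤ opA A G :=
  le_csSup ⟨√‖Gs ∘L G‖, by rintro _ ⟨y, hy, rfl⟩; exact nA_apply_le_sqrt_opNorm hA hG hy⟩
    ⟨x, hx, rfl⟩

theorem norm_ipA_apply_le_wA (hA : A.IsPositive) {G Gs : H →L[ℂ] H} (hG : IsAAdjoint A G Gs)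
    {x : H} (hx : nA A x = 1) : ‖ipA A (G x) x‖ ≤ wA A G := by
  refine le_csSup ⟨√‖Gs ∘L G‖, ?_⟩ ⟨x, hx, rfl⟩
  rintro _ ⟨y, hy, rfl⟩
  calc ‖ipA A (G y) y‖ ≤ nA A (G y) * nA A y := norm_ipA_le hA _ _
    _ ≤ √‖Gs ∘L G‖ := by rw [hy, mul_one]; exact nA_apply_le_sqrt_opNorm hA hG hy

omit [CompleteSpace H] in
theorem sq_opA_le {G : H →L[ℂ] H} {c : ℝ} (hc : 0 ≤ c)
    (h : ∀ x, nA A x = 1 → nA A (G x) ^ 2 ≤ c) : opA A G ^ 2 ≤ c := by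
  have hle : opA A G ≤ √c := Real.sSup_le
    (by rintro _ ⟨x, hx, rfl⟩; exact Real.le_sqrt_of_sq_le (h x hx)) (Real.sqrt_nonneg c)
  calc opA A G ^ 2 ≤ √c ^ 2 := by gcongr; exact opA_nonneg A G
    _ = c := Real.sq_sqrt hc

theorem nA_apply_pow_four_le (hA : A.IsPositive) {G Gs : H →L[ℂ] H} (hG : IsAAdjoint A G Gs)
    {x : H} (hx : nA A x = 1) :
    nA A (G x) ^ 4 ≤ (ipA A x (((Gs ∘L G) ∘L (Gs ∘L G)) x)).re := by
  have hQ : IsAAdjoint A (Gs ∘L G) (Gs ∘L G) := (hG.symm hA.isSelfAdjoint).comp hG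
  calc nA A (G x) ^ 4 = (ipA A x (Gs (G x))).re ^ 2 := by
        rw [← sq_nA_apply hA hG]; ring
    _ ≤ nA A ((Gs ∘L G) x) ^ 2 := by
        gcongr
        · rw [← sq_nA_apply hA hG]; positivity
        · exact re_ipA_le_nA hA hx _
    _ = _ := sq_nA_apply hA hQ x

theorem sq_nA_add_apply_le (hA : A.IsPositive) {T Ts S Ss : H →L[ℂ] H} (hT : IsAAdjoint A T Ts)
    (hS : IsAAdjoint A S Ss) {α : ℝ} (hα : α ∈ Set.Icc (0 : ℝ) 1) {x : H} (hx : nA A x = 1) :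
    nA A ((T + S) x) ^ 2 ≤
      √(opA A ((Ts ∘L T) ∘L (Ts ∘L T) + (Ss ∘L S) ∘L (Ss ∘L S)) + 2 * wA A (Ss ∘L T) ^ 2) +
        (α + 1) * (opA A T * opA A S) + (1 - α) * wA A (Ss ∘L T) := by
  have hSs : IsAAdjoint A Ss S := hS.symm hA.isSelfAdjoint
  have hTT : IsAAdjoint A (Ts ∘L T) (Ts ∘L T) := (hT.symm hA.isSelfAdjoint).comp hT
  have hSS : IsAAdjoint A (Ss ∘L S) (Ss ∘L S) := hSs.comp hS
  set B := CFC.sqrt A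
  have hTx : ‖B (T x)‖ ≤ opA A T := nA_eq_norm_sqrt hA (T x) ▸ nA_apply_le_opA hA hT hx
  have hSx : ‖B (S x)‖ ≤ opA A S := nA_eq_norm_sqrt hA (S x) ▸ nA_apply_le_opA hA hS hx
  have hinner : ‖⟪B (T x), B (S x)⟫_ℂ‖ ≤ wA A (Ss ∘L T) := by
    rw [← ipA_eq_inner_sqrt hA, ← hSs]
    exact norm_ipA_apply_le_wA hA (hSs.comp hT) hx
  have hfour : ‖B (T x)‖ ^ 4 + ‖B (S x)‖ ^ 4 ≤
      opA A ((Ts ∘L T) ∘L (Ts ∘L T) + (Ss ∘L S) ∘L (Ss ∘L S)) := by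
    rw [← nA_eq_norm_sqrt hA, ← nA_eq_norm_sqrt hA]
    calc _ ≤ (ipA A x (((Ts ∘L T) ∘L (Ts ∘L T)) x)).re +
          (ipA A x (((Ss ∘L S) ∘L (Ss ∘L S)) x)).re :=
          add_le_add (nA_apply_pow_four_le hA hT hx) (nA_apply_pow_four_le hA hS hx)
      _ = (ipA A x (((Ts ∘L T) ∘L (Ts ∘L T) + (Ss ∘L S) ∘L (Ss ∘L S)) x)).re := by
          simp only [ipA, add_apply, inner_add_right, Complex.add_re]
      _ ≤ _ := re_ipA_le_nA hA hx _
      _ ≤ _ := nA_apply_le_opA hA ((hTT.comp hTT).add (hSS.comp hSS)) hx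
  obtain ⟨hα0, hα1⟩ := hα
  calc nA A ((T + S) x) ^ 2 = ‖B (T x) + B (S x)‖ ^ 2 := by
        rw [nA_eq_norm_sqrt hA, add_apply, map_add]
    _ ≤ √(‖B (T x)‖ ^ 4 + ‖B (S x)‖ ^ 4 + 2 * ‖⟪B (T x), B (S x)⟫_ℂ‖ ^ 2) +
          (1 + α) * (‖B (T x)‖ * ‖B (S x)‖) + (1 - α) * ‖⟪B (T x), B (S x)⟫_ℂ‖ :=
        sq_norm_add_le _ _ ⟨hα0, hα1⟩
    _ ≤ _ := by
        rw [add_comm 1 α]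
        gcongr
        exact opA_nonneg A T

end ASeminorm

theorem stmt13 (A : H →L[ℂ] H) (hA : A.IsPositive) (T Ts S Ss : H →L[ℂ] H)
    (hadjT : ∀ x y : H, ipA A (T x) y = ipA A x (Ts y))
    (hadjS : ∀ x y : H, ipA A (S x) y = ipA A x (Ss y))
    (α : ℝ) (hα : α ∈ Set.Icc (0 : ℝ) 1) :
    opA A (T + S) ^ 2 ≤
      Real.sqrt (opA A ((Ts ∘L T) ∘L (Ts ∘L T) + (Ss ∘L S) ∘L (Ss ∘L S)) +
          2 * wA A (Ss ∘L T) ^ 2) +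
        (α + 1) * (opA A T * opA A S) + (1 - α) * wA A (Ss ∘L T) := by
  refine sq_opA_le ?_ fun x hx => sq_nA_add_apply_le hA hadjT hadjS hα hx
  obtain ⟨hα0, hα1⟩ := hα
  have hTS := mul_nonneg (opA_nonneg A T) (opA_nonneg A S)
  have hw := wA_nonneg A (Ss ∘L T)
  have hsqrt := Real.sqrt_nonneg
    (opA A ((Ts ∘L T) ∘L (Ts ∘L T) + (Ss ∘L S) ∘L (Ss ∘L S)) + 2 * wA A (Ss ∘L T) ^ 2)
  nlinarith
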